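/- arXiv:2103.16353 — 5 statements merged into one kernel-verified Lean document; each statement's English description precedes it below -/
import Mathlib

section
/- If 2 < p < q < 2N/(N-2), then for every u ∈ H^1(ℝ^N)\{0} with A(u)>0 and every μ > 0, the fibering map t ↦ λ^S_μ(tu) = (1/Q(u))·(t^{4/(N-2)} c_N^S T(u)^{N/(N-2)} - (2μ/p) t^{p-2} A(u) + (2/q) t^{q-2} B(u)) on (0,∞) has a unique critical point t(u) > 0, which is a global minimum with λ^S_μ(t(u)u) < 0. -/
/-!
After the substitution `a = 4/(N-2)`, `b = p - 2`, `c = q - 2` the fibering map has the form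
`f t = C₁ t^a - C₂ t^b + C₃ t^c` with positive coefficients and `0 < b < c < a`. Factoring
`f' t = t^(b-1) (g t - b C₂)` with `g t = a C₁ t^(a-b) + c C₃ t^(c-b)`, the function `g` is strictly
increasing from `g 0 = 0` to `∞`, so `f'` changes sign exactly once, from negative to positive, at the
unique `t₀` with `g t₀ = b C₂`. At that point `C₁ t₀^(a-b) + C₃ t₀^(c-b) < g t₀ / b = C₂`, because
`a, c > b`; hence `f t₀ < 0`.
-/

open Set

lemma strictMonoOn_rpow_add_rpow {K₁ K₂ α β : ℝ} (hK₁ : 0 < K₁) (hK₂ : 0 ≤ K₂)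
    (hα : 0 < α) (hβ : 0 < β) :
    StrictMonoOn (fun t : ℝ => K₁ * t ^ α + K₂ * t ^ β) (Ici 0) := fun _ hx _ _ hxy =>
  add_lt_add_of_lt_of_le (mul_lt_mul_of_pos_left (Real.rpow_lt_rpow hx hxy hα) hK₁)
    (mul_le_mul_of_nonneg_left (Real.rpow_le_rpow hx hxy.le hβ.le) hK₂)

lemma exists_pos_rpow_add_rpow_eq {K₁ K₂ α β y : ℝ} (hK₁ : 0 < K₁) (hK₂ : 0 ≤ K₂)
    (hα : 0 < α) (hβ : 0 < β) (hy : 0 < y) :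
    ∃ t, 0 < t ∧ K₁ * t ^ α + K₂ * t ^ β = y := by
  set g : ℝ → ℝ := fun t => K₁ * t ^ α + K₂ * t ^ β
  have hg0 : g 0 = 0 := by simp [g, Real.zero_rpow hα.ne', Real.zero_rpow hβ.ne']
  have hcont : ContinuousOn g (Ici 0) := by
    refine ContinuousOn.add (continuousOn_const.mul fun x _ => ?_)
      (continuousOn_const.mul fun x _ => ?_)
    · exact (Real.continuousAt_rpow_const x α (Or.inr hα.le)).continuousWithinAt
    · exact (Real.continuousAt_rpow_const x β (Or.inr hβ.le)).continuousWithinAt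
  -- at `t₁` the first term alone already reaches `y`
  set t₁ := (y / K₁) ^ α⁻¹
  have ht₁ : 0 < t₁ := by positivity
  have hgt₁ : y ≤ g t₁ := by
    have hpow : t₁ ^ α = y / K₁ := by
      rw [← Real.rpow_mul (by positivity), inv_mul_cancel₀ hα.ne', Real.rpow_one]
    have : 0 ≤ K₂ * t₁ ^ β := by positivity
    simp only [g, hpow, mul_div_cancel₀ y hK₁.ne']
    linarith
  obtain ⟨t, ht, hgt⟩ := intermediate_value_Icc ht₁.le (hcont.mono fun x hx => hx.1)
    ⟨by rw [hg0]; exact hy.le, hgt₁⟩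
  refine ⟨t, ht.1.lt_of_ne ?_, hgt⟩
  rintro rfl
  exact hy.ne' (hg0 ▸ hgt).symm

lemma hasDerivAt_three_rpow (C₁ C₂ C₃ a b c : ℝ) {t : ℝ} (ht : 0 < t) :
    HasDerivAt (fun s : ℝ => C₁ * s ^ a - C₂ * s ^ b + C₃ * s ^ c)
      (t ^ (b - 1) * (a * C₁ * t ^ (a - b) + c * C₃ * t ^ (c - b) - b * C₂)) t := by
  have hpow (e : ℝ) : HasDerivAt (fun s : ℝ => s ^ e) (e * t ^ (e - 1)) t :=
    Real.hasDerivAt_rpow_const (Or.inl ht.ne')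
  have hsplit (e : ℝ) : t ^ (e - 1) = t ^ (b - 1) * t ^ (e - b) := by
    rw [← Real.rpow_add ht]; ring_nf
  refine ((((hpow a).const_mul C₁).sub ((hpow b).const_mul C₂)).add
    ((hpow c).const_mul C₃)).congr_deriv ?_
  rw [hsplit a, hsplit c]
  ring

lemma three_rpow_neg_of_root {C₁ C₂ C₃ a b c t : ℝ} (hb : 0 < b) (hbc : b < c) (hca : c < a)
    (hC₁ : 0 < C₁) (hC₃ : 0 < C₃) (ht : 0 < t)
    (hroot : a * C₁ * t ^ (a - b) + c * C₃ * t ^ (c - b) = b * C₂) :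
    C₁ * t ^ a - C₂ * t ^ b + C₃ * t ^ c < 0 := by
  have hsplit (e : ℝ) : t ^ e = t ^ b * t ^ (e - b) := by
    rw [← Real.rpow_add ht]; ring_nf
  have hX : 0 < C₁ * t ^ (a - b) := by positivity
  have hY : 0 < C₃ * t ^ (c - b) := by positivity
  have hlt : C₁ * t ^ (a - b) + C₃ * t ^ (c - b) < C₂ := by
    refine lt_of_mul_lt_mul_left ?_ hb.le
    nlinarith
  rw [hsplit a, hsplit c]
  nlinarith [Real.rpow_pos_of_pos ht b]

lemma isMinOn_Ioi_of_deriv_neg_of_deriv_pos {f : ℝ → ℝ} {t₀ : ℝ} (ht₀ : 0 < t₀)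
    (hcont : ContinuousOn f (Ioi 0)) (hneg : ∀ t, 0 < t → t < t₀ → deriv f t < 0)
    (hpos : ∀ t, t₀ < t → 0 < deriv f t) : IsMinOn f (Ioi 0) t₀ := by
  intro t (ht : 0 < t)
  rcases le_total t t₀ with hle | hle
  · refine (strictAntiOn_of_deriv_neg (convex_Ioc 0 t₀) (hcont.mono fun x hx => hx.1) ?_).antitoneOn
      ⟨ht, hle⟩ ⟨ht₀, le_rfl⟩ hle
    intro x hx
    rw [interior_Ioc] at hx
    exact hneg x hx.1 hx.2
  · refine (strictMonoOn_of_deriv_pos (convex_Ici t₀) (hcont.mono fun x hx => ht₀.trans_le hx)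
      ?_).monotoneOn self_mem_Ici hle hle
    intro x hx
    rw [interior_Ici] at hx
    exact hpos x hx

theorem exists_unique_critical_point_three_rpow {C₁ C₂ C₃ a b c : ℝ} (hb : 0 < b) (hbc : b < c)
    (hca : c < a) (hC₁ : 0 < C₁) (hC₂ : 0 < C₂) (hC₃ : 0 < C₃) :
    let f := fun t : ℝ => C₁ * t ^ a - C₂ * t ^ b + C₃ * t ^ c
    ∃ t₀ : ℝ, 0 < t₀ ∧ (∀ t : ℝ, 0 < t → (deriv f t = 0 ↔ t = t₀)) ∧
      (∀ t : ℝ, 0 < t → f t₀ ≤ f t) ∧ f t₀ < 0 := by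
  intro f
  set g : ℝ → ℝ := fun t => a * C₁ * t ^ (a - b) + c * C₃ * t ^ (c - b)
  have hg : StrictMonoOn g (Ici 0) :=
    strictMonoOn_rpow_add_rpow (by nlinarith) (by nlinarith) (by linarith) (by linarith)
  obtain ⟨t₀, ht₀, hroot⟩ : ∃ t, 0 < t ∧ g t = b * C₂ :=
    exists_pos_rpow_add_rpow_eq (by nlinarith) (by nlinarith) (by linarith) (by linarith)
      (by positivity)
  have hf' {t : ℝ} (ht : 0 < t) : HasDerivAt f (t ^ (b - 1) * (g t - g t₀)) t :=
    hroot ▸ hasDerivAt_three_rpow C₁ C₂ C₃ a b c ht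
  have hderiv_neg {t : ℝ} (ht : 0 < t) (hlt : t < t₀) : deriv f t < 0 := by
    rw [(hf' ht).deriv]
    exact mul_neg_of_pos_of_neg (by positivity) (sub_neg.2 (hg ht.le ht₀.le hlt))
  have hderiv_pos {t : ℝ} (hlt : t₀ < t) : 0 < deriv f t := by
    have ht : 0 < t := ht₀.trans hlt
    rw [(hf' ht).deriv]
    exact mul_pos (by positivity) (sub_pos.2 (hg ht₀.le ht.le hlt))
  have hcont : ContinuousOn f (Ioi 0) := fun t ht => (hf' ht).continuousAt.continuousWithinAt
  refine ⟨t₀, ht₀, fun t ht => ⟨fun h => ?_, ?_⟩, fun t ht => ?_, ?_⟩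
  · rcases lt_trichotomy t t₀ with hlt | heq | hgt
    · exact absurd h (hderiv_neg ht hlt).ne
    · exact heq
    · exact absurd h (hderiv_pos hgt).ne'
  · rintro rfl
    simp [(hf' ht).deriv]
  · exact isMinOn_Ioi_of_deriv_neg_of_deriv_pos ht₀ hcont (fun _ => hderiv_neg)
      (fun _ => hderiv_pos) ht
  · exact three_rpow_neg_of_root hb hbc hca hC₁ hC₃ ht₀ hroot

/-- for 2 < p < q < 2N/(N-2), μ > 0, the fibering map
t ↦ λ^S_μ(tu) has a unique critical point on (0,∞), which is a global
minimum with negative value. -/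
theorem stmt2 (N : ℕ) (hN : 3 ≤ N) (S μ p q T A B Q : ℝ)
    (hS : 0 < S) (hp : 2 < p) (hpq : p < q) (hq' : q < 2 * (N : ℝ) / ((N : ℝ) - 2))
    (hμ : 0 < μ) (hT : 0 < T) (hA : 0 < A) (hB : 0 < B) (hQ : 0 < Q)
    (c : ℝ)
    (hc : c = ((N : ℝ) - 2) / ((N : ℝ) ^ ((N : ℝ) / ((N : ℝ) - 2)) * S ^ ((2 : ℝ) / ((N : ℝ) - 2))))
    (f : ℝ → ℝ)
    (hf : f = fun t : ℝ => (1 / Q) *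
        (t ^ ((4 : ℝ) / ((N : ℝ) - 2)) * c * T ^ ((N : ℝ) / ((N : ℝ) - 2))
          - (2 * μ / p) * t ^ (p - 2) * A + (2 / q) * t ^ (q - 2) * B)) :
    ∃ t0 : ℝ, 0 < t0 ∧ (∀ t : ℝ, 0 < t → (deriv f t = 0 ↔ t = t0)) ∧
      (∀ t : ℝ, 0 < t → f t0 ≤ f t) ∧ f t0 < 0 := by
  have hN2 : (0 : ℝ) < N - 2 := by
    have : (3 : ℝ) ≤ N := by exact_mod_cast hN
    linarith
  have hp₀ : 0 < p := by linarith
  have hq₀ : 0 < q := by linarith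
  have hcpos : 0 < c := hc ▸ by positivity
  have hqa : q - 2 < 4 / ((N : ℝ) - 2) := by
    have : 2 * (N : ℝ) / (N - 2) - 2 = 4 / (N - 2) := by field_simp; ring
    linarith
  have hf' : f = fun t : ℝ => c * T ^ ((N : ℝ) / (N - 2)) / Q * t ^ ((4 : ℝ) / (N - 2))
      - 2 * μ * A / (p * Q) * t ^ (p - 2) + 2 * B / (q * Q) * t ^ (q - 2) := by
    rw [hf]; funext t; field_simp
  subst hf'
  exact exists_unique_critical_point_three_rpow (by linarith) (by linarith) hqa
    (by positivity) (by positivity) (by positivity)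
end

section
/- Assume p, q ∈ (2, 2^*), μ > 0, S₂ > S₁ > 0, and suppose û^{S_j} ∈ H^1\{0} are global minimizers of λ^{S_j}_μ normalized so that T(û^{S_j}) = N S_j (j = 1,2), with minimum values λ̂^{S_j}_μ = λ^{S_j}_μ(û^{S_j}). Then λ̂^{S_2}_μ - λ̂^{S_1}_μ < -2(S_2 - S_1)(S_1/S_2)^{N/(N-2)} / Q(û^{S_1}) and λ̂^{S_2}_μ - λ̂^{S_1}_μ > -2(S_2 - S_1)(S_2/S_1)^{N/(N-2)} / Q(û^{S_2}). In particular S ↦ λ̂^S_μ is strictly decreasing. -/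
open MeasureTheory

private lemma mvt_key {α a b : ℝ} (hα : 1 < α) (ha : 0 < a) (hab : a < b) :
    (b - a) * b ^ (-α) < (a ^ (1 - α) - b ^ (1 - α)) / (α - 1) ∧
    (a ^ (1 - α) - b ^ (1 - α)) / (α - 1) < (b - a) * a ^ (-α) := by
  have hb : 0 < b := ha.trans hab
  have hba : 0 < b - a := by linarith
  have hα1 : 0 < α - 1 := by linarith
  have hcont : ContinuousOn (fun x : ℝ => x ^ (1 - α)) (Set.Icc a b) := by
    apply ContinuousOn.rpow_const continuousOn_id
    intro x hx
    exact Or.inl (ne_of_gt (lt_of_lt_of_le ha hx.1))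
  have hderiv : ∀ x ∈ Set.Ioo a b,
      HasDerivAt (fun y : ℝ => y ^ (1 - α)) ((1 - α) * x ^ (-α)) x := by
    intro x hx
    have hx0 : (0:ℝ) < x := ha.trans hx.1
    have := Real.hasDerivAt_rpow_const (p := 1 - α) (x := x) (Or.inl (ne_of_gt hx0))
    simpa [show (1 - α) - 1 = -α by ring] using this
  obtain ⟨c, hc, heq⟩ := exists_hasDerivAt_eq_slope _ _ hab hcont hderiv
  have hcpos : 0 < c := ha.trans hc.1
  have heq' : b ^ (1 - α) - a ^ (1 - α) = (1 - α) * c ^ (-α) * (b - a) := by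
    rw [heq]; field_simp
  have hval : (a ^ (1 - α) - b ^ (1 - α)) / (α - 1) = (b - a) * c ^ (-α) := by
    rw [div_eq_iff (ne_of_gt hα1)]
    linear_combination -heq'
  have h1 : c ^ α < b ^ α := Real.rpow_lt_rpow hcpos.le hc.2 (by linarith)
  have h2 : a ^ α < c ^ α := Real.rpow_lt_rpow ha.le hc.1 (by linarith)
  have hbneg : b ^ (-α) < c ^ (-α) := by
    rw [Real.rpow_neg hb.le, Real.rpow_neg hcpos.le]
    exact inv_strictAnti₀ (Real.rpow_pos_of_pos hcpos α) h1
  have haneg : c ^ (-α) < a ^ (-α) := by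
    rw [Real.rpow_neg ha.le, Real.rpow_neg hcpos.le]
    exact inv_strictAnti₀ (Real.rpow_pos_of_pos ha α) h2
  rw [hval]
  exact ⟨mul_lt_mul_of_pos_left hbneg hba, mul_lt_mul_of_pos_left haneg hba⟩

private lemma step_key {α a b : ℝ} (hα : 1 < α) (ha : 0 < a) (hab : a < b) :
    2 / (α - 1) * a ^ α * (b ^ (1 - α) - a ^ (1 - α)) < -2 * (b - a) * (a / b) ^ α ∧
    -2 * (b - a) * (b / a) ^ α < 2 / (α - 1) * b ^ α * (b ^ (1 - α) - a ^ (1 - α)) := by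
  have hb : 0 < b := ha.trans hab
  have hα1 : 0 < α - 1 := by linarith
  obtain ⟨k1, k2⟩ := mvt_key hα ha hab
  have haα : 0 < a ^ α := Real.rpow_pos_of_pos ha α
  have hbα : 0 < b ^ α := Real.rpow_pos_of_pos hb α
  have hdiv1 : (a / b) ^ α = a ^ α * b ^ (-α) := by
    rw [Real.div_rpow ha.le hb.le, Real.rpow_neg hb.le, div_eq_mul_inv]
  have hdiv2 : (b / a) ^ α = b ^ α * a ^ (-α) := by
    rw [Real.div_rpow hb.le ha.le, Real.rpow_neg ha.le, div_eq_mul_inv]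
  constructor
  · rw [hdiv1]
    have h := mul_lt_mul_of_pos_left k1 (mul_pos two_pos haα)
    have e1 : 2 * a ^ α * ((a ^ (1 - α) - b ^ (1 - α)) / (α - 1))
        = -(2 / (α - 1) * a ^ α * (b ^ (1 - α) - a ^ (1 - α))) := by
      field_simp; ring
    have e2 : 2 * a ^ α * ((b - a) * b ^ (-α)) = -(-2 * (b - a) * (a ^ α * b ^ (-α))) := by ring
    linarith [h, e1, e2]
  · rw [hdiv2]
    have h := mul_lt_mul_of_pos_left k2 (mul_pos two_pos hbα)
    have e1 : 2 * b ^ α * ((a ^ (1 - α) - b ^ (1 - α)) / (α - 1))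
        = -(2 / (α - 1) * b ^ α * (b ^ (1 - α) - a ^ (1 - α))) := by
      field_simp; ring
    have e2 : 2 * b ^ α * ((b - a) * a ^ (-α)) = -(-2 * (b - a) * (b ^ α * a ^ (-α))) := by ring
    linarith [h, e1, e2]


/-- monotonicity estimate for S ↦ λ̂^S_μ. If û^{S_j} are global
minimizers of λ^{S_j}_μ over nonzero H^1 functions, normalized so that
T(û^{S_j}) = N S_j, then
-2(S₂-S₁)(S₂/S₁)^{N/(N-2)}/Q(û^{S₂}) < λ̂^{S₂}_μ - λ̂^{S₁}_μ
  < -2(S₂-S₁)(S₁/S₂)^{N/(N-2)}/Q(û^{S₁});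
in particular λ̂^{S₂}_μ < λ̂^{S₁}_μ. -/
theorem stmt12 (N : ℕ) (hN : 3 ≤ N) (p q μ S1 S2 : ℝ)
    (hp : 2 < p) (hp2 : p < 2 * (N : ℝ) / ((N : ℝ) - 2))
    (hq : 2 < q) (hq2 : q < 2 * (N : ℝ) / ((N : ℝ) - 2))
    (hμ : 0 < μ) (hS1 : 0 < S1) (hS12 : S1 < S2)
    (T A B Q : (EuclideanSpace ℝ (Fin N) → ℝ) → ℝ)
    (hT : T = fun u => ∫ x, ‖fderiv ℝ u x‖ ^ 2)
    (hA : A = fun u => ∫ x, |u x| ^ p)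
    (hB : B = fun u => ∫ x, |u x| ^ q)
    (hQ : Q = fun u => ∫ x, |u x| ^ (2 : ℝ))
    (lam : ℝ → (EuclideanSpace ℝ (Fin N) → ℝ) → ℝ)
    (hlam : lam = fun S u =>
      (2 / Q u) *
        (((N : ℝ) - 2) / ((N : ℝ) ^ ((N : ℝ) / ((N : ℝ) - 2)) * S ^ ((2 : ℝ) / ((N : ℝ) - 2))) / 2
            * (T u) ^ ((N : ℝ) / ((N : ℝ) - 2))
          - μ / p * A u + 1 / q * B u))
    (u1 u2 : EuclideanSpace ℝ (Fin N) → ℝ)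
    (hu1 : MemLp u1 2 volume ∧ MemLp (fun x => fderiv ℝ u1 x) 2 volume ∧
      ¬ (u1 =ᵐ[volume] (fun _ => (0 : ℝ))))
    (hu2 : MemLp u2 2 volume ∧ MemLp (fun x => fderiv ℝ u2 x) 2 volume ∧
      ¬ (u2 =ᵐ[volume] (fun _ => (0 : ℝ))))
    (hmin1 : ∀ u : EuclideanSpace ℝ (Fin N) → ℝ,
      MemLp u 2 volume → MemLp (fun x => fderiv ℝ u x) 2 volume →
      ¬ (u =ᵐ[volume] (fun _ => (0 : ℝ))) → lam S1 u1 ≤ lam S1 u)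
    (hmin2 : ∀ u : EuclideanSpace ℝ (Fin N) → ℝ,
      MemLp u 2 volume → MemLp (fun x => fderiv ℝ u x) 2 volume →
      ¬ (u =ᵐ[volume] (fun _ => (0 : ℝ))) → lam S2 u2 ≤ lam S2 u)
    (hnorm1 : T u1 = (N : ℝ) * S1) (hnorm2 : T u2 = (N : ℝ) * S2) :
    -2 * (S2 - S1) * (S2 / S1) ^ ((N : ℝ) / ((N : ℝ) - 2)) / Q u2
        < lam S2 u2 - lam S1 u1 ∧
      lam S2 u2 - lam S1 u1
        < -2 * (S2 - S1) * (S1 / S2) ^ ((N : ℝ) / ((N : ℝ) - 2)) / Q u1 ∧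
      lam S2 u2 < lam S1 u1 := by
  have hd : (0:ℝ) < (N:ℝ) - 2 := by
    have : (3:ℝ) ≤ N := by exact_mod_cast hN
    linarith
  have hNpos : (0:ℝ) < N := by linarith
  have hS2 : 0 < S2 := hS1.trans hS12
  have hα : 1 < (N:ℝ)/((N:ℝ)-2) := (one_lt_div hd).mpr (by linarith)
  have Qpos : ∀ u : EuclideanSpace ℝ (Fin N) → ℝ, MemLp u 2 volume →
      ¬ (u =ᵐ[volume] (fun _ => (0 : ℝ))) → 0 < Q u := by
    intro u hmem hne
    rw [hQ]
    have hint : Integrable (fun x => ‖u x‖ ^ ((2:ENNReal).toReal)) volume :=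
      hmem.integrable_norm_rpow (by norm_num) (by norm_num)
    have h2 : ((2:ENNReal)).toReal = (2:ℝ) := by simp
    rw [h2] at hint
    have hint' : Integrable (fun x => |u x| ^ (2:ℝ)) volume := by
      simpa [Real.norm_eq_abs] using hint
    have hnn : ∀ x, 0 ≤ |u x| ^ (2:ℝ) := fun x => Real.rpow_nonneg (abs_nonneg _) _
    rcases lt_or_eq_of_le (integral_nonneg (f := fun x => |u x| ^ (2:ℝ)) hnn) with h | h
    · exact h
    · exfalso
      apply hne
      have hz := (integral_eq_zero_iff_of_nonneg_ae (Filter.Eventually.of_forall hnn) hint').mp h.symm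
      filter_upwards [hz] with x hx
      by_contra hx0
      have : 0 < |u x| := abs_pos.mpr hx0
      exact absurd hx (ne_of_gt (Real.rpow_pos_of_pos this 2))
  have hQ1 : 0 < Q u1 := Qpos u1 hu1.1 hu1.2.2
  have hQ2 : 0 < Q u2 := Qpos u2 hu2.1 hu2.2.2
  have form : ∀ S : ℝ, 0 < S → ∀ Sj : ℝ, 0 < Sj → ∀ u : EuclideanSpace ℝ (Fin N) → ℝ,
      T u = (N:ℝ) * Sj → Q u ≠ 0 →
      lam S u = (((N : ℝ) - 2) * Sj ^ ((N:ℝ)/((N:ℝ)-2)) * S ^ (1 - (N:ℝ)/((N:ℝ)-2))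
        + 2 * (-(μ / p) * A u + (1 / q) * B u)) / Q u := by
    intro S hS Sj hSj u hTu hQu
    simp only [hlam]
    rw [hTu, Real.mul_rpow hNpos.le hSj.le]
    have hNα : (0:ℝ) < (N:ℝ) ^ ((N:ℝ)/((N:ℝ)-2)) := Real.rpow_pos_of_pos hNpos _
    have hSe : (0:ℝ) < S ^ ((2:ℝ)/((N:ℝ)-2)) := Real.rpow_pos_of_pos hS _
    have hexp : S ^ (1 - (N:ℝ)/((N:ℝ)-2)) = (S ^ ((2:ℝ)/((N:ℝ)-2)))⁻¹ := by
      rw [← Real.rpow_neg hS.le]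
      congr 1
      field_simp
      ring
    rw [hexp]
    have hp0 : p ≠ 0 := by positivity
    have hq0 : q ≠ 0 := by positivity
    field_simp
    ring
  have hE1 : lam S2 u1 - lam S1 u1 = (((N:ℝ) - 2) * S1 ^ ((N:ℝ)/((N:ℝ)-2))
      * (S2 ^ (1 - (N:ℝ)/((N:ℝ)-2)) - S1 ^ (1 - (N:ℝ)/((N:ℝ)-2)))) / Q u1 := by
    rw [form S2 hS2 S1 hS1 u1 hnorm1 hQ1.ne', form S1 hS1 S1 hS1 u1 hnorm1 hQ1.ne']
    ring
  have hE2 : lam S2 u2 - lam S1 u2 = (((N:ℝ) - 2) * S2 ^ ((N:ℝ)/((N:ℝ)-2))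
      * (S2 ^ (1 - (N:ℝ)/((N:ℝ)-2)) - S1 ^ (1 - (N:ℝ)/((N:ℝ)-2)))) / Q u2 := by
    rw [form S2 hS2 S2 hS2 u2 hnorm2 hQ2.ne', form S1 hS1 S2 hS2 u2 hnorm2 hQ2.ne']
    ring
  have hc : (N:ℝ) - 2 = 2 / ((N:ℝ)/((N:ℝ)-2) - 1) := by
    rw [eq_div_iff (ne_of_gt (by linarith : (0:ℝ) < (N:ℝ)/((N:ℝ)-2) - 1))]
    field_simp
    ring
  obtain ⟨st1, st2⟩ := step_key hα hS1 hS12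
  rw [← hc] at st1 st2
  have hm2 : lam S2 u2 ≤ lam S2 u1 := hmin2 u1 hu1.1 hu1.2.1 hu1.2.2
  have hm1 : lam S1 u1 ≤ lam S1 u2 := hmin1 u2 hu2.1 hu2.2.1 hu2.2.2
  have hub : lam S2 u2 - lam S1 u1
      < -2 * (S2 - S1) * (S1 / S2) ^ ((N : ℝ) / ((N : ℝ) - 2)) / Q u1 := by
    have h1 : lam S2 u1 - lam S1 u1
        < -2 * (S2 - S1) * (S1 / S2) ^ ((N : ℝ) / ((N : ℝ) - 2)) / Q u1 := by
      rw [hE1]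
      exact (div_lt_div_iff_of_pos_right hQ1).mpr st1
    linarith
  have hlb : -2 * (S2 - S1) * (S2 / S1) ^ ((N : ℝ) / ((N : ℝ) - 2)) / Q u2
      < lam S2 u2 - lam S1 u1 := by
    have h1 : -2 * (S2 - S1) * (S2 / S1) ^ ((N : ℝ) / ((N : ℝ) - 2)) / Q u2
        < lam S2 u2 - lam S1 u2 := by
      rw [hE2]
      exact (div_lt_div_iff_of_pos_right hQ2).mpr st2
    linarith
  have hneg : -2 * (S2 - S1) * (S1 / S2) ^ ((N : ℝ) / ((N : ℝ) - 2)) / Q u1 < 0 := by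
    apply div_neg_of_neg_of_pos _ hQ1
    have := Real.rpow_pos_of_pos (div_pos hS1 hS2) ((N : ℝ) / ((N : ℝ) - 2))
    nlinarith
  exact ⟨hlb, hub, by linarith⟩
end

section
/- Let 2 < p < q < 2^* and μ > 0. The zero-frequency equation -Δu - μ|u|^{p-2}u + |u|^{q-2}u = 0 has no nontrivial weak solution u ∈ D^{1,2}(ℝ^N) ∩ L^q(ℝ^N). Equivalently: if u ≠ 0 satisfies DS_{0,μ}(u) = 0 (so that both the Nehari identity T(u) = μA(u) - B(u) and the Pohozaev identity (N-2)/2·T(u) = N(μ/p·A(u) - 1/q·B(u)) hold), then the fibering map s ↦ M^S(su) = ((c_N^S/2) s^{2^*-p} T(u)^{N/(N-2)} + (1/q)s^{q-p}B(u))/((1/p)A(u)) would have a critical point at s = 1, which is impossible since for p < q both exponents 2^*-p > 0 and q-p > 0 make M^S(s u) strictly increasing after its infimum at 0; derive a contradiction. -/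
/-- nonexistence of nontrivial zero-frequency solutions for
2 < p < q < 2^*: if u ≠ 0 were a weak solution (so that the Nehari identity
T = μA - B and the Pohozaev identity (N-2)/2·T = N(μ/p·A - 1/q·B) hold, with
T, A, B > 0 and positive action S), a contradiction follows. -/
theorem stmt14 (N : ℕ) (hN : 3 ≤ N) (p q μ T A B S : ℝ)
    (hp : 2 < p) (hpq : p < q) (hq : q < 2 * (N : ℝ) / ((N : ℝ) - 2)) (hμ : 0 < μ)
    (hT : 0 < T) (hA : 0 < A) (hB : 0 < B)
    (hS : S = (1 / 2) * T - (μ / p) * A + (1 / q) * B) (hSpos : 0 < S)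
    (hNehari : T = μ * A - B)
    (hPohozaev : ((N : ℝ) - 2) / 2 * T = (N : ℝ) * (μ / p * A - 1 / q * B)) :
    False := by
  have hn : (3:ℝ) ≤ (N:ℝ) := by exact_mod_cast hN
  have hn2 : (0:ℝ) < (N:ℝ) - 2 := by linarith
  have hp0 : (0:ℝ) < p := by linarith
  have hq0 : (0:ℝ) < q := by linarith
  have h1 : q * ((N:ℝ) - 2) < 2 * N := by
    have := (lt_div_iff₀ hn2).mp hq
    linarith
  have key : (N:ℝ) * (μ * A) * (q - p) * 2 = p * T * (((N:ℝ) - 2) * q - 2 * N) := by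
    have hB' : B = μ * A - T := by linarith
    rw [hB'] at hPohozaev
    field_simp at hPohozaev
    nlinarith [hPohozaev]
  nlinarith [mul_pos (mul_pos (mul_pos (by linarith : (0:ℝ) < (N:ℝ)) (mul_pos hμ hA)) (sub_pos.mpr hpq)) (by norm_num : (0:ℝ) < 2), mul_pos hp0 hT, key]
end

section
/- Suppose w ∈ H^1(ℝ^N) minimizes H_μ over the constraint Q(u) = α (α > α₀(μ)), where the minimum value function α ↦ Ĥ^α_μ is nonincreasing, and w satisfies the Lagrange condition DH_μ(w) + τ DQ(w) = 0 with τ = -DH_μ(w)(w)/(2Q(w)). If DH_μ(w)(w) > 0 then, setting w_b = (1-t)w for small t > 0, one gets H_μ(w_b) < Ĥ^α_μ and Q(w_b) < α, contradicting monotonicity of Ĥ^α_μ. Hence τ ≥ 0 (and under the strict-decrease hypothesis of Shibata's theorem, τ > 0). -/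
/-- sign of the Lagrange multiplier for the prescribed mass
minimization. If w minimizes H_μ on {Q = α} (α > α₀), the minimum value
function Ĥ is nonincreasing, and t ↦ H_μ((1-t)w) has derivative -DH_μ(w)(w)
at 0, then DH_μ(w)(w) ≤ 0, i.e. τ = -DH_μ(w)(w)/(2Q(w)) ≥ 0. -/
theorem stmt15 {E : Type*} [NormedAddCommGroup E] [NormedSpace ℝ E]
    (H Q : E → ℝ) (Hhat : ℝ → ℝ) (α₀ α : ℝ) (w : E) (DHw : ℝ)
    (hα : α₀ < α) (hα₀ : 0 ≤ α₀) (hQw : Q w = α) (hαpos : 0 < α)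
    (hmin : Hhat α = H w)
    (hlower : ∀ u : E, α₀ < Q u → Hhat (Q u) ≤ H u)
    (hmono : ∀ β γ : ℝ, α₀ < β → β ≤ γ → Hhat γ ≤ Hhat β)
    (hderiv : HasDerivAt (fun t : ℝ => H ((1 - t) • w)) (-DHw) 0)
    (hQscale : ∀ t : ℝ, Q ((1 - t) • w) = (1 - t) ^ 2 * Q w) :
    DHw ≤ 0 ∧ 0 ≤ -DHw / (2 * Q w) := by
  have hkey : DHw ≤ 0 := by
    by_contra hpos
    push_neg at hpos
    set f : ℝ → ℝ := fun t : ℝ => H ((1 - t) • w) with hf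
    have hslope : Filter.Tendsto (slope f 0) (nhdsWithin 0 {(0:ℝ)}ᶜ) (nhds (-DHw)) :=
      hasDerivAt_iff_tendsto_slope.mp hderiv
    have h1 : ∀ᶠ t in nhdsWithin (0:ℝ) {(0:ℝ)}ᶜ, slope f 0 t < 0 :=
      hslope.eventually_lt_const (by linarith)
    have hcont : Filter.Tendsto (fun t : ℝ => (1 - t) ^ 2 * α) (nhds 0) (nhds α) := by
      have : Continuous (fun t : ℝ => (1 - t) ^ 2 * α) := by continuity
      have h0 := this.tendsto 0
      simpa using h0
    have h2 : ∀ᶠ t in nhds (0:ℝ), α₀ < (1 - t) ^ 2 * α :=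
      hcont.eventually_const_lt hα
    have h3 : ∀ᶠ t in nhds (0:ℝ), t < 1 :=
      Filter.Tendsto.eventually_lt_const (by norm_num) Filter.tendsto_id
    have hle : nhdsWithin (0:ℝ) (Set.Ioi 0) ≤ nhdsWithin (0:ℝ) {(0:ℝ)}ᶜ :=
      nhdsWithin_mono 0 (fun t ht => ne_of_gt ht)
    have h1' : ∀ᶠ t in nhdsWithin (0:ℝ) (Set.Ioi 0), slope f 0 t < 0 := hle h1
    have h2' : ∀ᶠ t in nhdsWithin (0:ℝ) (Set.Ioi 0), α₀ < (1 - t) ^ 2 * α := nhdsWithin_le_nhds h2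
    have h3' : ∀ᶠ t in nhdsWithin (0:ℝ) (Set.Ioi 0), t < 1 := nhdsWithin_le_nhds h3
    have h4 : ∀ᶠ t in nhdsWithin (0:ℝ) (Set.Ioi 0), (0:ℝ) < t :=
      eventually_nhdsWithin_of_forall (fun t ht => ht)
    obtain ⟨t, hs, hαt, ht1, ht0⟩ := (h1'.and (h2'.and (h3'.and h4))).exists
    have hft : f t < f 0 := by
      have hsl : slope f 0 t = (f t - f 0) / t := by
        rw [slope_def_field]; ring_nf
      rw [hsl] at hs
      have := (div_neg_iff.mp hs)
      rcases this with ⟨h, _⟩ | ⟨_, h⟩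
      · linarith
      · linarith
    have hf0 : f 0 = H w := by simp [hf]
    have hQt : Q ((1 - t) • w) = (1 - t) ^ 2 * α := by rw [hQscale, hQw]
    have hchain : Hhat α ≤ H ((1 - t) • w) := by
      have := hlower ((1 - t) • w) (by rw [hQt]; exact hαt)
      rw [hQt] at this
      have hle2 : (1 - t) ^ 2 * α ≤ α := by nlinarith [mul_pos (mul_pos ht0 (show (0:ℝ) < 2 - t by linarith)) hαpos]
      exact le_trans (hmono _ _ hαt hle2) this
    rw [hmin, ← hf0] at hchain
    exact absurd (lt_of_lt_of_le hft hchain) (lt_irrefl _)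
  refine ⟨hkey, div_nonneg (by linarith) (by rw [hQw]; linarith)⟩
end

section
/- Let 2 < q < p < 2^* and fix S > 0. The relation between the two Rayleigh quotients holds: μ^S(u) = C_{p,q,N,S} B(u)^{(2^*-p)/(2^*-q)} T(u)^{2^*(p-q)/(2(2^*-q))}/A(u) equals min_{s>0} M^S(su), where M^S(v) = ((c_N^S/2)T(v)^{N/(N-2)} + (1/q)B(v))/((1/p)A(v)) and C_{p,q,N,S} = c(p,q,N)/S^{2(p-q)/((2^*-q)(N-2))} with c(p,q,N) = ((N-2)/N^{N/(N-2)} · q(2^*-p)/(2(p-q)))^{(p-q)/(2^*-q)} · p(2^*-q)/(q(2^*-p)). Consequently inf_{u≠0} μ^S(u) = inf_{u≠0} M^S(u). -/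
/-!
With `ν = N/(N-2)`, `a = 2^* - p` and `b = p - q`, the fibre `s ↦ M^S(su)` equals
`(p/A)(α s^a + β s^(-b))` with `α = c_N^S T^ν / 2`, `β = B / q`. Normalising by its critical
point `s₀`, it becomes `μ^S(u) · (b/(a+b) t^a + a/(a+b) t^(-b))` with `t = s/s₀`, and the weighted
AM-GM inequality bounds the bracket below by `t^(ab/(a+b)) t^(-ab/(a+b)) = 1`, with equality at
`t = 1`. The infima agree because `M^S(u) ≥ μ^S(u) = M^S(s₀u)` and the family is closed under
`u ↦ s₀u`.
-/

open Real Set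

theorem ciInf_eq_of_forall_le_of_forall_exists_le {α ι : Type*} [ConditionallyCompleteLattice α]
    [Nonempty ι] {f g : ι → α} (hf : BddBelow (range f)) (hfg : ∀ i, f i ≤ g i)
    (hgf : ∀ i, ∃ j, g j ≤ f i) : iInf f = iInf g := by
  obtain ⟨m, hm⟩ := hf
  have hg : BddBelow (range g) :=
    ⟨m, forall_mem_range.2 fun i => (hm (mem_range_self i)).trans (hfg i)⟩
  exact le_antisymm (ciInf_mono ⟨m, hm⟩ hfg) (ciInf_mono_of_forall_exists hg hgf)

namespace Real

theorem one_le_weighted_rpow_add_rpow_neg {a b t : ℝ} (ha : 0 < a) (hb : 0 < b) (ht : 0 < t) :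
    1 ≤ b / (a + b) * t ^ a + a / (a + b) * t ^ (-b) := by
  have hab : 0 < a + b := by linarith
  calc (1 : ℝ) = (t ^ a) ^ (b / (a + b)) * (t ^ (-b)) ^ (a / (a + b)) := by
        rw [← rpow_mul ht.le, ← rpow_mul ht.le, ← rpow_add ht,
          show a * (b / (a + b)) + -b * (a / (a + b)) = 0 by ring, rpow_zero]
    _ ≤ _ := geom_mean_le_arith_mean2_weighted (by positivity) (by positivity)
        (by positivity) (by positivity) (by field_simp; ring)

theorem mul_rpow_div_self {x y : ℝ} (hx : 0 < x) (hy : 0 ≤ y) (t : ℝ) :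
    x * (y / x) ^ t = x ^ (1 - t) * y ^ t := by
  rw [div_rpow hy hx.le, rpow_sub hx, rpow_one]
  field_simp

end Real

/-- The minimiser of `s ↦ α * s ^ a + β * s ^ (-b)` on `(0, ∞)`, the root of
`a * α * s ^ a = b * β * s ^ (-b)`. -/
noncomputable def rpowBalancePoint (a b α β : ℝ) : ℝ := (b * β / (a * α)) ^ (1 / (a + b))

noncomputable def rpowBalanceMin (a b α β : ℝ) : ℝ :=
  (a + b) / b * α * rpowBalancePoint a b α β ^ a

section RpowBalance

variable {a b α β : ℝ} (ha : 0 < a) (hb : 0 < b) (hα : 0 < α) (hβ : 0 < β)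
include ha hb hα hβ

theorem rpowBalancePoint_pos : 0 < rpowBalancePoint a b α β := by
  unfold rpowBalancePoint; positivity

theorem rpow_add_rpow_neg_eq_mul_weighted {s : ℝ} (hs : 0 < s) :
    α * s ^ a + β * s ^ (-b) = rpowBalanceMin a b α β *
      (b / (a + b) * (s / rpowBalancePoint a b α β) ^ a
        + a / (a + b) * (s / rpowBalancePoint a b α β) ^ (-b)) := by
  have hu := rpowBalancePoint_pos ha hb hα hβ
  have hu_pow : rpowBalancePoint a b α β ^ a * rpowBalancePoint a b α β ^ b
      = b * β / (a * α) := by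
    rw [← rpow_add hu, rpowBalancePoint, ← rpow_mul (by positivity),
      one_div_mul_cancel (by positivity : (0 : ℝ) < a + b).ne', rpow_one]
  rw [rpowBalanceMin]
  set u := rpowBalancePoint a b α β
  rw [div_rpow hs.le hu.le, div_rpow hs.le hu.le, rpow_neg hs.le, rpow_neg hu.le]
  have : 0 < u ^ a := by positivity
  have : 0 < u ^ b := by positivity
  field_simp
  rw [mul_assoc a, hu_pow]
  field_simp

theorem rpowBalanceMin_le {s : ℝ} (hs : 0 < s) :
    rpowBalanceMin a b α β ≤ α * s ^ a + β * s ^ (-b) := by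
  have hu := rpowBalancePoint_pos ha hb hα hβ
  rw [rpow_add_rpow_neg_eq_mul_weighted ha hb hα hβ hs]
  exact le_mul_of_one_le_right (by unfold rpowBalanceMin; positivity)
    (one_le_weighted_rpow_add_rpow_neg ha hb (div_pos hs hu))

theorem rpow_add_rpow_neg_rpowBalancePoint :
    α * rpowBalancePoint a b α β ^ a + β * rpowBalancePoint a b α β ^ (-b)
      = rpowBalanceMin a b α β := by
  have hu := rpowBalancePoint_pos ha hb hα hβ
  rw [rpow_add_rpow_neg_eq_mul_weighted ha hb hα hβ hu, div_self hu.ne', one_rpow, one_rpow,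
    ← add_mul, ← add_div, add_comm b, div_self (by positivity), one_mul, mul_one]

end RpowBalance

section ScaledQuotient

variable {ν p q c κ T A B : ℝ}

/- `scaledQuotient ν p q c T A B s` is `M^S(su)` for `T, A, B = T(u), A(u), B(u)`, `c = c_N^S` and
`ν = N/(N-2)`; `scaledQuotientMin` is `μ^S(u)`, with `κ = c_{p,q,N,S}`. -/

noncomputable def scaledQuotient (ν p q c T A B s : ℝ) : ℝ :=
  (c / 2 * (s ^ 2 * T) ^ ν + 1 / q * (s ^ q * B)) / ((1 / p) * (s ^ p * A))

noncomputable def scaledQuotientMin (ν p q κ T A B : ℝ) : ℝ :=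
  p * (2 * ν - q) / (q * (2 * ν - p)) * κ ^ ((p - q) / (2 * ν - q))
    * B ^ ((2 * ν - p) / (2 * ν - q)) * T ^ (ν * ((p - q) / (2 * ν - q))) / A

noncomputable def scaledQuotientArgmin (ν q κ T B : ℝ) : ℝ :=
  (B / (κ * T ^ ν)) ^ (1 / (2 * ν - q))

theorem scaledQuotient_eq {s : ℝ} (hs : 0 < s) (hT : 0 ≤ T) :
    scaledQuotient ν p q c T A B s
      = p / A * (c / 2 * T ^ ν * s ^ (2 * ν - p) + B / q * s ^ (-(p - q))) := by
  rw [scaledQuotient, mul_rpow (by positivity) hT, ← rpow_natCast, ← rpow_mul hs.le,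
    rpow_sub hs, rpow_neg hs.le, rpow_sub hs]
  have := rpow_pos_of_pos hs p
  field_simp
  push_cast
  ring

theorem rpowBalancePoint_eq_scaledQuotientArgmin (hκ : κ = c * q * (2 * ν - p) / (2 * (p - q))) :
    rpowBalancePoint (2 * ν - p) (p - q) (c / 2 * T ^ ν) (B / q)
      = scaledQuotientArgmin ν q κ T B := by
  rw [rpowBalancePoint, scaledQuotientArgmin, hκ, show 2 * ν - p + (p - q) = 2 * ν - q by ring]
  congr 1
  simp only [div_eq_mul_inv, mul_inv, inv_inv]
  ring

variable (hq : 0 < q) (hqp : q < p) (hp : p < 2 * ν) (hc : 0 < c) (hT : 0 < T)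
  (hκ : κ = c * q * (2 * ν - p) / (2 * (p - q)))
include hq hqp hp hc hT hκ

theorem div_mul_rpowBalanceMin (hB : 0 < B) :
    p / A * rpowBalanceMin (2 * ν - p) (p - q) (c / 2 * T ^ ν) (B / q)
      = scaledQuotientMin ν p q κ T A B := by
  have hTν := rpow_pos_of_pos hT ν
  have : 0 < p - q := by linarith
  have : 0 < 2 * ν - p := by linarith
  have : 0 < 2 * ν - q := by linarith
  have hκ0 : 0 < κ := by rw [hκ]; positivity
  rw [rpowBalanceMin, rpowBalancePoint_eq_scaledQuotientArgmin hκ, scaledQuotientArgmin,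
    ← rpow_mul (by positivity),
    one_div_mul_eq_div, show 2 * ν - p + (p - q) = 2 * ν - q by ring,
    show (2 * ν - q) / (p - q) * (c / 2 * T ^ ν)
      = (2 * ν - q) / (q * (2 * ν - p)) * (κ * T ^ ν) by rw [hκ]; field_simp,
    mul_assoc _ (κ * T ^ ν), mul_rpow_div_self (by positivity) hB.le, mul_rpow hκ0.le hTν.le,
    ← rpow_mul hT.le,
    show 1 - (2 * ν - p) / (2 * ν - q) = (p - q) / (2 * ν - q) by field_simp; ring,
    scaledQuotientMin]
  ring

theorem scaledQuotientMin_pos (hA : 0 < A) (hB : 0 < B) :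
    0 < scaledQuotientMin ν p q κ T A B := by
  have : 0 < 2 * ν - p := by linarith
  have : 0 < p - q := by linarith
  have : 0 < 2 * ν - q := by linarith
  have : 0 < p := by linarith
  have : 0 < κ := by rw [hκ]; positivity
  unfold scaledQuotientMin
  positivity

theorem scaledQuotientArgmin_pos (hB : 0 < B) : 0 < scaledQuotientArgmin ν q κ T B := by
  have : 0 < 2 * ν - p := by linarith
  have : 0 < p - q := by linarith
  have : 0 < κ := by rw [hκ]; positivity
  unfold scaledQuotientArgmin
  positivity

theorem le_scaledQuotient (hA : 0 < A) (hB : 0 < B) {s : ℝ} (hs : 0 < s) :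
    scaledQuotientMin ν p q κ T A B ≤ scaledQuotient ν p q c T A B s := by
  have : 0 < p := by linarith
  rw [← div_mul_rpowBalanceMin hq hqp hp hc hT hκ hB, scaledQuotient_eq hs hT.le]
  exact mul_le_mul_of_nonneg_left (rpowBalanceMin_le (by linarith) (by linarith)
    (by positivity) (by positivity) hs) (by positivity)

theorem scaledQuotient_argmin (hB : 0 < B) :
    scaledQuotient ν p q c T A B (scaledQuotientArgmin ν q κ T B)
      = scaledQuotientMin ν p q κ T A B := by
  have ha : 0 < 2 * ν - p := by linarith
  have hb : 0 < p - q := by linarith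
  have hα : 0 < c / 2 * T ^ ν := by positivity
  have hβ : 0 < B / q := by positivity
  rw [← div_mul_rpowBalanceMin hq hqp hp hc hT hκ hB,
    ← rpowBalancePoint_eq_scaledQuotientArgmin hκ,
    scaledQuotient_eq (rpowBalancePoint_pos ha hb hα hβ) hT.le,
    rpow_add_rpow_neg_rpowBalancePoint ha hb hα hβ]

end ScaledQuotient

theorem scaledQuotient_one_of_scale {ν p q c T A B s : ℝ} :
    scaledQuotient ν p q c (s ^ 2 * T) (s ^ p * A) (s ^ q * B) 1
      = scaledQuotient ν p q c T A B s := by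
  simp [scaledQuotient]

theorem rayleighConstant_eq {n S p q ν c κ : ℝ} (hn : 0 < n - 2) (hS : 0 < S) (hq : 0 < q)
    (hqp : q < p) (hp : p < 2 * ν) (hc : c = (n - 2) / (n ^ ν * S ^ (2 / (n - 2))))
    (hκ : κ = c * q * (2 * ν - p) / (2 * (p - q))) :
    ((n - 2) / n ^ ν * (q * (2 * ν - p) / (2 * (p - q)))) ^ ((p - q) / (2 * ν - q))
        * (p * (2 * ν - q) / (q * (2 * ν - p))) / S ^ (2 * (p - q) / ((2 * ν - q) * (n - 2)))
      = p * (2 * ν - q) / (q * (2 * ν - p)) * κ ^ ((p - q) / (2 * ν - q)) := by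
  have : 0 < n := by linarith
  have : 0 < 2 * ν - p := by linarith
  have : 0 < p - q := by linarith
  have : 0 < 2 * ν - q := by linarith
  have hκ' : κ = (n - 2) / n ^ ν * (q * (2 * ν - p) / (2 * (p - q))) / S ^ (2 / (n - 2)) := by
    rw [hκ, hc]; field_simp
  rw [hκ', div_rpow (by positivity) (by positivity), ← rpow_mul hS.le]
  field_simp

/-- μ^S(u) = min_{s>0} M^S(su) with the explicit constant
C_{p,q,N,S} = c(p,q,N)/S^{2(p-q)/((2^*-q)(N-2))}, the minimum being attained
at s^S(u) = (B/(c_{p,q,N,S}T^{N/(N-2)}))^{1/(2^*-q)}; consequently, for a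
family of nonzero functions closed under amplitude scaling,
inf μ^S = inf M^S. Here `I` indexes the family and T, A, B its integral
quantities. -/
theorem stmt19 (N : ℕ) (hN : 3 ≤ N) (p q S : ℝ)
    (hq : 2 < q) (hqp : q < p) (hp : p < 2 * (N : ℝ) / ((N : ℝ) - 2)) (hS : 0 < S)
    {I : Type*} [Nonempty I] (T A B : I → ℝ)
    (hT : ∀ i, 0 < T i) (hA : ∀ i, 0 < A i) (hB : ∀ i, 0 < B i)
    (hscale : ∀ i : I, ∀ s : ℝ, 0 < s →
      ∃ j : I, T j = s ^ 2 * T i ∧ A j = s ^ p * A i ∧ B j = s ^ q * B i)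
    (twostar cN cpq Cc : ℝ)
    (h2s : twostar = 2 * (N : ℝ) / ((N : ℝ) - 2))
    (hcN : cN = ((N : ℝ) - 2) / ((N : ℝ) ^ ((N : ℝ) / ((N : ℝ) - 2)) * S ^ ((2 : ℝ) / ((N : ℝ) - 2))))
    (hcpq : cpq = cN * q * (twostar - p) / (2 * (p - q)))
    (hCc : Cc = ((((N : ℝ) - 2) / (N : ℝ) ^ ((N : ℝ) / ((N : ℝ) - 2)))
          * (q * (twostar - p) / (2 * (p - q)))) ^ ((p - q) / (twostar - q))
        * (p * (twostar - q) / (q * (twostar - p)))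
        / S ^ (2 * (p - q) / ((twostar - q) * ((N : ℝ) - 2))))
    (muq Mq : I → ℝ)
    (hmuq : muq = fun i => Cc * (B i) ^ ((twostar - p) / (twostar - q))
        * (T i) ^ (twostar * (p - q) / (2 * (twostar - q))) / A i)
    (hMq : Mq = fun i =>
        (cN / 2 * (T i) ^ ((N : ℝ) / ((N : ℝ) - 2)) + (1 / q) * B i) / ((1 / p) * A i))
    (Mfib : I → ℝ → ℝ)
    (hMfib : Mfib = fun i s =>
        (cN / 2 * (s ^ 2 * T i) ^ ((N : ℝ) / ((N : ℝ) - 2)) + (1 / q) * (s ^ q * B i))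
          / ((1 / p) * (s ^ p * A i))) :
    (∀ i : I, (∀ s : ℝ, 0 < s → muq i ≤ Mfib i s) ∧
      (let s0 := (B i / (cpq * (T i) ^ ((N : ℝ) / ((N : ℝ) - 2)))) ^ ((1 : ℝ) / (twostar - q));
        0 < s0 ∧ Mfib i s0 = muq i)) ∧
    sInf (Set.range muq) = sInf (Set.range Mq) := by
  have hN2 : (0 : ℝ) < N - 2 := by
    have : (3 : ℝ) ≤ N := by exact_mod_cast hN
    linarith
  set ν := (N : ℝ) / (N - 2)
  have h2ν : twostar = 2 * ν := by rw [h2s]; ring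
  subst h2ν
  rw [← h2s] at hp
  have hq0 : 0 < q := by linarith
  have hcN0 : 0 < cN := by rw [hcN]; positivity
  have hmu : ∀ i, muq i = scaledQuotientMin ν p q cpq (T i) (A i) (B i) := by
    intro i
    rw [hmuq, hCc, rayleighConstant_eq hN2 hS hq0 hqp hp hcN hcpq, scaledQuotientMin,
      show 2 * ν * (p - q) / (2 * (2 * ν - q)) = ν * ((p - q) / (2 * ν - q)) by field_simp]
  have hM : ∀ i s, Mfib i s = scaledQuotient ν p q cN (T i) (A i) (B i) s := by
    subst hMfib; exact fun _ _ => rfl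
  have hMq' : ∀ i, Mq i = scaledQuotient ν p q cN (T i) (A i) (B i) 1 := by
    simp [hMq, scaledQuotient]
  have hle : ∀ i s, 0 < s → muq i ≤ Mfib i s := fun i s hs =>
    hmu i ▸ hM i s ▸ le_scaledQuotient hq0 hqp hp hcN0 (hT i) hcpq (hA i) (hB i) hs
  have hmin : ∀ i, Mfib i (scaledQuotientArgmin ν q cpq (T i) (B i)) = muq i := fun i =>
    hmu i ▸ hM i _ ▸ scaledQuotient_argmin hq0 hqp hp hcN0 (hT i) hcpq (hB i)
  have hs0 : ∀ i, 0 < scaledQuotientArgmin ν q cpq (T i) (B i) := fun i =>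
    scaledQuotientArgmin_pos hq0 hqp hp hcN0 (hT i) hcpq (hB i)
  refine ⟨fun i => ⟨hle i, hs0 i, hmin i⟩, ?_⟩
  refine ciInf_eq_of_forall_le_of_forall_exists_le ⟨0, forall_mem_range.2 fun i => ?_⟩
    (fun i => hMq' i ▸ hM i 1 ▸ hle i 1 one_pos) fun i => ?_
  · exact hmu i ▸ (scaledQuotientMin_pos hq0 hqp hp hcN0 (hT i) hcpq (hA i) (hB i)).le
  obtain ⟨j, hTj, hAj, hBj⟩ := hscale i _ (hs0 i)
  refine ⟨j, le_of_eq ?_⟩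
  rw [hMq', hTj, hAj, hBj, scaledQuotient_one_of_scale, ← hM, hmin]
end
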